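/- arXiv:2305.12026 — 6 statements merged into one kernel-verified Lean document; each statement's English description precedes it below -/
import Mathlib

section
/- Let A₁,…,A_d be Hermitian n×n matrices and U ∈ O(d), with Âⱼ = Σₛ u_{js} Aₛ. Then λ is in the Clifford spectrum of (A₁,…,A_d) if and only if Uλ is in the Clifford spectrum of (Â₁,…,Â_d). -/
open scoped Kronecker Matrix RealInnerProductSpace

/-!
Write `c x = ∑ᵢ xᵢ • γᵢ` for `x ∈ ℝᵈ`; the Clifford relations say `c x * c y + c y * c x = 2⟪x, y⟫`.
For `v ≠ 0` this makes `c v` invertible, and conjugation by it realises the reflection in `v⊥`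
up to sign: `c (s_v x) = -(c v * c x * (c v)⁻¹)`. By Cartan–Dieudonné every orthogonal map is a
product of reflections, so `∑ⱼ Uⱼₛ • γⱼ = ± u * γₛ * u⁻¹` for one invertible `u`. Hence the rotated
operator is `±(1 ⊗ u) L_λ (1 ⊗ u)⁻¹`, which is invertible exactly when `L_λ` is.
-/

section Clifford

variable {ι R : Type*} [Fintype ι] [Ring R] [Algebra ℝ R]

noncomputable def cliffordMap (γ : ι → R) : EuclideanSpace ℝ ι →ₗ[ℝ] R :=
  Fintype.linearCombination ℝ γ ∘ₗ (WithLp.linearEquiv 2 ℝ (ι → ℝ)).toLinearMap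

@[simp]
theorem cliffordMap_apply (γ : ι → R) (x : EuclideanSpace ℝ ι) :
    cliffordMap γ x = ∑ i, x i • γ i := by
  simp [cliffordMap, Fintype.linearCombination_apply]

theorem cliffordMap_mul_add_mul_swap [DecidableEq ι] {γ : ι → R}
    (hsq : ∀ j, γ j * γ j = 1) (hanti : ∀ j k, j ≠ k → γ j * γ k = -(γ k * γ j))
    (x y : EuclideanSpace ℝ ι) :
    cliffordMap γ x * cliffordMap γ y + cliffordMap γ y * cliffordMap γ x =
      (2 * ⟪x, y⟫) • (1 : R) := by
  have hγ : ∀ k l, γ k * γ l + γ l * γ k = if k = l then (2 : ℝ) • (1 : R) else 0 := by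
    intro k l
    split_ifs with h
    · rw [h, hsq, two_smul]
    · rw [hanti k l h, neg_add_cancel]
  calc cliffordMap γ x * cliffordMap γ y + cliffordMap γ y * cliffordMap γ x
      = ∑ k, ∑ l, (x k * y l) • (γ k * γ l + γ l * γ k) := by
        simp only [cliffordMap_apply, Finset.sum_mul_sum, smul_mul_smul, smul_add,
          Finset.sum_add_distrib]
        rw [Finset.sum_comm (f := fun l k => (y l * x k) • (γ l * γ k))]
        simp only [mul_comm (y _)]
    _ = ∑ k, (x k * y k) • (2 : ℝ) • (1 : R) := by
        simp only [hγ, smul_ite, smul_zero, Finset.sum_ite_eq, Finset.mem_univ, if_true]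
    _ = (2 * ⟪x, y⟫) • (1 : R) := by
        simp only [smul_smul, ← Finset.sum_smul, PiLp.inner_apply, RCLike.inner_apply,
          conj_trivial, Finset.mul_sum]
        congr 1
        exact Finset.sum_congr rfl fun k _ => by ring

theorem cliffordMap_mul_self [DecidableEq ι] {γ : ι → R}
    (hsq : ∀ j, γ j * γ j = 1) (hanti : ∀ j k, j ≠ k → γ j * γ k = -(γ k * γ j))
    (x : EuclideanSpace ℝ ι) :
    cliffordMap γ x * cliffordMap γ x = ‖x‖ ^ 2 • (1 : R) := by
  have h := cliffordMap_mul_add_mul_swap hsq hanti x x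
  rw [← two_smul ℝ, real_inner_self_eq_norm_sq, mul_smul] at h
  exact smul_right_injective R two_ne_zero h

variable (γ : ι → R)

def cliffordConjIsometries :
    Submonoid (EuclideanSpace ℝ ι ≃ₗᵢ[ℝ] EuclideanSpace ℝ ι) where
  carrier := {φ | ∃ (u : Rˣ) (ε : ℤˣ), ∀ x,
    cliffordMap γ (φ x) = ε • (↑u * cliffordMap γ x * ↑u⁻¹)}
  one_mem' := ⟨1, 1, fun x => by simp⟩
  mul_mem' := by
    rintro φ ψ ⟨u, ε, hφ⟩ ⟨v, δ, hψ⟩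
    refine ⟨u * v, ε * δ, fun x => ?_⟩
    rw [LinearIsometryEquiv.coe_mul, Function.comp_apply, hφ, hψ, mul_smul_comm, smul_mul_assoc,
      mul_smul]
    simp only [Units.val_mul, mul_inv_rev, mul_assoc]

variable {γ}

theorem reflection_mem_cliffordConjIsometries [DecidableEq ι]
    (hsq : ∀ j, γ j * γ j = 1) (hanti : ∀ j k, j ≠ k → γ j * γ k = -(γ k * γ j))
    (v : EuclideanSpace ℝ ι) :
    (ℝ ∙ v)ᗮ.reflection ∈ cliffordConjIsometries γ := by
  rcases eq_or_ne v 0 with rfl | hv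
  · refine ⟨1, 1, fun x => ?_⟩
    rw [Submodule.reflection_mem_subspace_eq_self (by simp)]
    simp
  set c := cliffordMap γ
  have hnv : ‖v‖ ^ 2 ≠ 0 := by positivity
  have hvv := cliffordMap_mul_self hsq hanti v
  let u : Rˣ :=
    { val := c v
      inv := (‖v‖ ^ 2)⁻¹ • c v
      val_inv := by rw [mul_smul_comm, hvv, smul_smul, inv_mul_cancel₀ hnv, one_smul]
      inv_val := by rw [smul_mul_assoc, hvv, smul_smul, inv_mul_cancel₀ hnv, one_smul] }
  refine ⟨u, -1, fun x => ?_⟩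
  have hsandwich : c v * c x * c v = (2 * ⟪x, v⟫) • c v - ‖v‖ ^ 2 • c x := by
    rw [mul_assoc, eq_sub_of_add_eq (cliffordMap_mul_add_mul_swap hsq hanti x v), mul_sub,
      mul_smul_comm, mul_one, ← mul_assoc, hvv, smul_mul_assoc, one_mul]
  simp only [Submodule.reflection_orthogonal_apply, Submodule.reflection_singleton_apply,
    map_neg, map_sub, map_smul, map_nsmul]
  show _ = (-1 : ℤˣ) • (c v * c x * ((‖v‖ ^ 2)⁻¹ • c v))
  rw [mul_smul_comm, hsandwich, real_inner_comm]
  simp only [Units.neg_smul, one_smul, RCLike.ofReal_real_eq_id, id]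
  match_scalars <;> field_simp

theorem cliffordConjIsometries_eq_top [DecidableEq ι]
    (hsq : ∀ j, γ j * γ j = 1) (hanti : ∀ j k, j ≠ k → γ j * γ k = -(γ k * γ j)) :
    cliffordConjIsometries γ = ⊤ := by
  refine eq_top_iff.mpr fun φ _ => ?_
  obtain ⟨l, -, rfl⟩ := φ.reflections_generate_dim
  refine Submonoid.list_prod_mem _ fun ψ hψ => ?_
  obtain ⟨v, -, rfl⟩ := List.mem_map.mp hψ
  exact reflection_mem_cliffordConjIsometries hsq hanti v

end Clifford

section Kronecker

variable {ι l m α : Type*} [Fintype ι] [CommRing α]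

theorem sum_sum_smul_kronecker_comm (W : ι → ι → α) (B : ι → Matrix l l α)
    (C : ι → Matrix m m α) :
    ∑ j, (∑ s, W j s • B s) ⊗ₖ C j = ∑ s, B s ⊗ₖ ∑ j, W j s • C j := by
  change ∑ j, Matrix.kroneckerBilinear (R := α) (∑ s, W j s • B s) (C j) =
    ∑ s, Matrix.kroneckerBilinear (R := α) (B s) (∑ j, W j s • C j)
  simp only [map_sum, map_smul, LinearMap.sum_apply, LinearMap.smul_apply]
  exact Finset.sum_comm

variable [Fintype l] [DecidableEq l] [Fintype m] [DecidableEq m]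

theorem sum_kronecker_conj (B : ι → Matrix l l α) (C : ι → Matrix m m α)
    (u : (Matrix m m α)ˣ) :
    ∑ s, B s ⊗ₖ ((u : Matrix m m α) * C s * (↑u⁻¹ : Matrix m m α)) =
      (1 ⊗ₖ (u : Matrix m m α)) * (∑ s, B s ⊗ₖ C s) * (1 ⊗ₖ (↑u⁻¹ : Matrix m m α)) := by
  simp only [Matrix.mul_sum, Matrix.sum_mul, ← Matrix.mul_kronecker_mul, one_mul, mul_one]

theorem isUnit_one_kronecker_conj_iff (u : (Matrix m m α)ˣ) (L : Matrix (l × m) (l × m) α) :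
    IsUnit ((1 ⊗ₖ (u : Matrix m m α)) * L * (1 ⊗ₖ (↑u⁻¹ : Matrix m m α))) ↔ IsUnit L := by
  let P := Matrix.GeneralLinearGroup.kronecker (1 : (Matrix l l α)ˣ) u
  rw [mul_assoc]
  exact (Units.isUnit_units_mul P (L * (↑P⁻¹ : Matrix (l × m) (l × m) α))).trans
    (Units.isUnit_mul_units L P⁻¹)

end Kronecker

theorem clifford_spectrum_rotation_general
    {d n m : ℕ} (A : Fin d → Matrix (Fin n) (Fin n) ℂ)
    (γ : Fin d → Matrix (Fin m) (Fin m) ℂ)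
    (hsq : ∀ j, γ j * γ j = 1)
    (hanti : ∀ j k, j ≠ k → γ j * γ k = -(γ k * γ j))
    (U : Matrix (Fin d) (Fin d) ℝ) (hU : U ∈ Matrix.orthogonalGroup (Fin d) ℝ)
    (lam : Fin d → ℝ) :
    (¬ IsUnit (∑ j, ((A j - (lam j : ℂ) • 1) ⊗ₖ γ j))) ↔
    (¬ IsUnit (∑ j, (((∑ s, (U j s : ℂ) • A s) - (U.mulVec lam j : ℂ) • 1) ⊗ₖ γ j))) := by
  let φ : EuclideanSpace ℝ (Fin d) ≃ₗᵢ[ℝ] EuclideanSpace ℝ (Fin d) :=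
    Unitary.linearIsometryEquiv ⟨Matrix.toEuclideanCLM (𝕜 := ℝ) U, Unitary.map_mem _ hU⟩
  obtain ⟨u, ε, hu⟩ : φ ∈ cliffordConjIsometries γ := by
    rw [cliffordConjIsometries_eq_top hsq hanti]
    trivial
  have hrot : ∀ s, ∑ j, (U j s : ℂ) • γ j =
      ε • ((u : Matrix (Fin m) (Fin m) ℂ) * γ s * (↑u⁻¹ : Matrix (Fin m) (Fin m) ℂ)) := by
    intro s
    have hφ : ∀ x, φ x = Matrix.toEuclideanCLM (𝕜 := ℝ) U x := fun _ => rfl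
    simpa [hφ, Complex.coe_smul, Matrix.mulVec_single, -Matrix.coe_units_inv]
      using hu (EuclideanSpace.single s 1)
  have hcoef : ∀ j, (∑ s, (U j s : ℂ) • A s) - (U.mulVec lam j : ℂ) • 1 =
      ∑ s, (U j s : ℂ) • (A s - (lam s : ℂ) • 1) := by
    intro j
    simp [Matrix.mulVec, dotProduct, smul_sub, Finset.sum_smul, mul_smul]
  have hconj : ∑ j, ((∑ s, (U j s : ℂ) • A s) - (U.mulVec lam j : ℂ) • 1) ⊗ₖ γ j =
      ε • ((1 ⊗ₖ (u : Matrix (Fin m) (Fin m) ℂ)) * (∑ j, (A j - (lam j : ℂ) • 1) ⊗ₖ γ j) *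
        (1 ⊗ₖ (↑u⁻¹ : Matrix (Fin m) (Fin m) ℂ))) := by
    simp only [hcoef, sum_sum_smul_kronecker_comm, hrot, Matrix.kronecker_smul,
      ← Finset.smul_sum, sum_kronecker_conj]
  rw [hconj, isUnit_smul_iff, isUnit_one_kronecker_conj_iff]

theorem clifford_spectrum_rotation
    {d n m : ℕ} (A : Fin d → Matrix (Fin n) (Fin n) ℂ)
    (hA : ∀ j, (A j).IsHermitian)
    (γ : Fin d → Matrix (Fin m) (Fin m) ℂ)
    (hherm : ∀ j, (γ j).IsHermitian)
    (hsq : ∀ j, γ j * γ j = 1)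
    (hanti : ∀ j k, j ≠ k → γ j * γ k = -(γ k * γ j))
    (U : Matrix (Fin d) (Fin d) ℝ) (hU : U ∈ Matrix.orthogonalGroup (Fin d) ℝ)
    (lam : Fin d → ℝ) :
    (¬ IsUnit (∑ j, ((A j - (lam j : ℂ) • 1) ⊗ₖ γ j))) ↔
    (¬ IsUnit (∑ j, (((∑ s, (U j s : ℂ) • A s) - (U.mulVec lam j : ℂ) • 1) ⊗ₖ γ j))) :=
  clifford_spectrum_rotation_general A γ hsq hanti U hU lam
end

section
/- For d = 2, the point (x, y) ∈ ℝ² lies in the Clifford spectrum of a pair of Hermitian matrices (A₁, A₂) if and only if x + iy lies in the ordinary spectrum of A₁ + iA₂. -/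
open scoped Kronecker Matrix

noncomputable def sx : Matrix (Fin 2) (Fin 2) ℂ := !![0, 1; 1, 0]
noncomputable def sy : Matrix (Fin 2) (Fin 2) ℂ := !![0, -Complex.I; Complex.I, 0]
noncomputable def sz : Matrix (Fin 2) (Fin 2) ℂ := !![1, 0; 0, -1]
noncomputable def pauli : Fin 3 → Matrix (Fin 2) (Fin 2) ℂ := ![sx, sy, sz]

lemma clifford_mulVec_key {n : ℕ} (M N : Matrix (Fin n) (Fin n) ℂ)
    (w : Fin n × Fin 2 → ℂ) (i : Fin n) :
    ((M ⊗ₖ sx + N ⊗ₖ sy).mulVec w) (i, 0)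
      = ((M - Complex.I • N).mulVec (fun j => w (j, 1))) i ∧
    ((M ⊗ₖ sx + N ⊗ₖ sy).mulVec w) (i, 1)
      = ((M + Complex.I • N).mulVec (fun j => w (j, 0))) i := by
  simp only [Matrix.mulVec, dotProduct, Fintype.sum_prod_type, Matrix.add_apply,
    Matrix.kroneckerMap_apply, sx, sy, Fin.sum_univ_two, Matrix.sub_apply,
    Matrix.smul_apply, smul_eq_mul]
  constructor <;> apply Finset.sum_congr rfl <;> intro j _ <;>
    simp [Matrix.cons_val_zero, Matrix.cons_val_one] <;> exact Or.inl (by ring)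

theorem clifford_spectrum_two_matrices
    {n : ℕ} (A₁ A₂ : Matrix (Fin n) (Fin n) ℂ)
    (h₁ : A₁.IsHermitian) (h₂ : A₂.IsHermitian) (x y : ℝ) :
    (¬ IsUnit ((A₁ - (x : ℂ) • 1) ⊗ₖ sx + (A₂ - (y : ℂ) • 1) ⊗ₖ sy)) ↔
    ((x : ℂ) + (y : ℂ) * Complex.I) ∈ spectrum ℂ (A₁ + Complex.I • A₂) := by
  set M : Matrix (Fin n) (Fin n) ℂ := A₁ - (x : ℂ) • 1 with hM
  set N : Matrix (Fin n) (Fin n) ℂ := A₂ - (y : ℂ) • 1 with hN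
  set Cp : Matrix (Fin n) (Fin n) ℂ := M + Complex.I • N with hCp
  set Cm : Matrix (Fin n) (Fin n) ℂ := M - Complex.I • N with hCm
  have hconj : Cpᴴ = Cm := by
    simp [hCp, hCm, hM, hN, Matrix.conjTranspose_add, Matrix.conjTranspose_sub,
      Matrix.conjTranspose_smul, h₁.eq, h₂.eq, Complex.conj_I, Complex.conj_ofReal,
      smul_sub, sub_smul]
    abel
  have hdet_mm : Cm.det = 0 ↔ Cp.det = 0 := by
    rw [← hconj, Matrix.det_conjTranspose, star_eq_zero]
  have hrhs : ((x : ℂ) + (y : ℂ) * Complex.I) ∈ spectrum ℂ (A₁ + Complex.I • A₂)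
      ↔ Cp.det = 0 := by
    rw [spectrum.mem_iff, Algebra.algebraMap_eq_smul_one]
    have : ((x : ℂ) + (y : ℂ) * Complex.I) • (1 : Matrix (Fin n) (Fin n) ℂ)
        - (A₁ + Complex.I • A₂) = -Cp := by
      ext i j
      by_cases h : i = j <;>
        simp [hCp, hM, hN, Matrix.add_apply, Matrix.sub_apply, Matrix.smul_apply,
          Matrix.one_apply, Matrix.neg_apply, h, smul_eq_mul] <;> ring
    rw [this, IsUnit.neg_iff, Matrix.isUnit_iff_isUnit_det, isUnit_iff_ne_zero, not_not]
  rw [hrhs, Matrix.isUnit_iff_isUnit_det, isUnit_iff_ne_zero, not_not,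
    ← Matrix.exists_mulVec_eq_zero_iff, ← Matrix.exists_mulVec_eq_zero_iff]
  constructor
  · rintro ⟨w, hw, hBw⟩
    have h0 : Cp.mulVec (fun j => w (j, 0)) = 0 := by
      funext i
      have := (clifford_mulVec_key M N w i).2
      rw [hBw] at this
      simpa using this.symm
    have h1 : Cm.mulVec (fun j => w (j, 1)) = 0 := by
      funext i
      have := (clifford_mulVec_key M N w i).1
      rw [hBw] at this
      simpa using this.symm
    by_cases hz : (fun j => w (j, 0)) = 0
    · have hw1 : (fun j => w (j, 1)) ≠ 0 := by
        intro hz1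
        apply hw
        funext p
        obtain ⟨j, b⟩ := p
        fin_cases b
        · exact congrFun hz j
        · exact congrFun hz1 j
      have : Cm.det = 0 := Matrix.exists_mulVec_eq_zero_iff.mp ⟨_, hw1, h1⟩
      obtain ⟨v, hv, hCv⟩ := Matrix.exists_mulVec_eq_zero_iff.mpr (hdet_mm.mp this)
      exact ⟨v, hv, hCv⟩
    · exact ⟨_, hz, h0⟩
  · rintro ⟨v, hv, hCv⟩
    refine ⟨fun p => if p.2 = 0 then v p.1 else 0, ?_, ?_⟩
    · intro hz
      apply hv
      funext j
      simpa using congrFun hz (j, 0)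
    · funext p
      obtain ⟨i, a⟩ := p
      have ha : a = 0 ∨ a = 1 := by omega
      rcases ha with rfl | rfl
      · have := (clifford_mulVec_key M N (fun p => if p.2 = 0 then v p.1 else 0) i).1
        simpa [Matrix.mulVec, dotProduct] using this
      · have := (clifford_mulVec_key M N (fun p => if p.2 = 0 then v p.1 else 0) i).2
        rw [Pi.zero_apply, this]
        simpa using congrFun hCv i
end

section
/- The Clifford spectrum of the triple of Pauli matrices (σ_x, σ_y, σ_z) is the unit sphere in ℝ³; moreover, the smallest singular value of the localizer satisfies μ_λ^C(σ_x, σ_y, σ_z) = | |λ| - 1 | for all λ ∈ ℝ³. -/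
open scoped Kronecker Matrix

/-- Smallest singular value of a complex matrix. -/
noncomputable def smin {ι : Type*} [Fintype ι] [DecidableEq ι]
    (M : Matrix ι ι ℂ) : ℝ :=
  sInf ((fun x : EuclideanSpace ℂ ι => ‖Matrix.toEuclideanLin M x‖) '' Metric.sphere 0 1)

/-!
Write `L_λ = Σⱼ σⱼ ⊗ σⱼ - 1 ⊗ (λ·σ)`: the first term acts as `2·swap - 1`, and `(λ·σ)² = |λ|²`.
Expanding in coordinates,
`‖L_λ x‖² = (1 - |λ|)² ‖x‖² + 4 |x₀₁ - x₁₀|² + 2 Σₖ ⟨x₍·ₖ₎, (|λ| - λ·σ) x₍·ₖ₎⟩`,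
and `|λ| - λ·σ ≥ 0` since `(|λ| - λ·σ)² = 2|λ| (|λ| - λ·σ)`. So `|1 - |λ||` bounds `‖L_λ x‖ / ‖x‖`
from below, and the bound is attained at `ψ ⊗ ψ` for `λ·σ ψ = |λ| ψ`: the swap fixes `ψ ⊗ ψ`, hence
`L_λ (ψ ⊗ ψ) = (1 - |λ|) ψ ⊗ ψ`.
-/

open Complex Matrix

theorem smin_eq_norm_of_mulVec_eq_smul {ι : Type*} [Fintype ι] [DecidableEq ι]
    {M : Matrix ι ι ℂ} {μ : ℂ}
    (hle : ∀ x : EuclideanSpace ℂ ι, ‖μ‖ * ‖x‖ ≤ ‖toEuclideanLin M x‖)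
    {x : ι → ℂ} (hx : x ≠ 0) (hμ : M *ᵥ x = μ • x) :
    smin M = ‖μ‖ := by
  set y : EuclideanSpace ℂ ι := WithLp.toLp 2 x
  have hy : ‖y‖ ≠ 0 := by simpa [y] using hx
  have hMy : toEuclideanLin M y = μ • y := by
    simp [y, hμ]
  refine IsLeast.csInf_eq ⟨⟨‖y‖⁻¹ • y, ?_, ?_⟩, ?_⟩
  · simp [norm_smul, hy]
  · show ‖toEuclideanLin M (‖y‖⁻¹ • y)‖ = ‖μ‖
    rw [LinearMap.map_smul_of_tower, hMy, norm_smul, norm_smul, norm_inv, norm_norm]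
    field_simp
  · rintro _ ⟨y, hy, rfl⟩
    simpa [mem_sphere_zero_iff_norm.mp hy] using hle y

theorem Matrix.one_kronecker_mulVec {R m n n' : Type*} [Semiring R] [Fintype m] [Fintype n']
    [DecidableEq m] (B : Matrix n n' R) (x : m × n' → R) :
    ((1 : Matrix m m R) ⊗ₖ B) *ᵥ x = fun p => (B *ᵥ fun l => x (p.1, l)) p.2 := by
  ext ⟨i, k⟩
  simp [mulVec, dotProduct, Fintype.sum_prod_type, one_apply, ite_mul]

namespace PauliLocalizer

variable (lam : EuclideanSpace ℝ (Fin 3))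

noncomputable def localizer : Matrix (Fin 2 × Fin 2) (Fin 2 × Fin 2) ℂ :=
  ∑ j, ((pauli j - (lam j : ℂ) • 1) ⊗ₖ pauli j)

noncomputable def spin : Matrix (Fin 2) (Fin 2) ℂ := ∑ j, (lam j : ℂ) • pauli j

theorem spin_eq : spin lam = !![(lam 2 : ℂ), lam 0 - lam 1 * I; lam 0 + lam 1 * I, -lam 2] := by
  ext i j
  fin_cases i <;> fin_cases j <;> simp [spin, pauli, sx, sy, sz, Fin.sum_univ_three, sub_eq_add_neg]

theorem sum_pauli_kronecker_self_mulVec (x : Fin 2 × Fin 2 → ℂ) :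
    (∑ j, pauli j ⊗ₖ pauli j) *ᵥ x = fun p => 2 * x p.swap - x p := by
  ext ⟨i, k⟩
  fin_cases i <;> fin_cases k <;>
    simp [pauli, sx, sy, sz, Fin.sum_univ_three, mulVec, dotProduct, Fintype.sum_prod_type,
      Matrix.sum_apply] <;> ring_nf

theorem localizer_eq : localizer lam = ∑ j, pauli j ⊗ₖ pauli j - 1 ⊗ₖ spin lam := by
  ext p q
  simp only [localizer, spin, Matrix.sum_apply, kroneckerMap_apply, Matrix.sub_apply,
    Matrix.smul_apply, smul_eq_mul, sub_mul, Finset.sum_sub_distrib, Finset.mul_sum, sub_right_inj]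
  exact Finset.sum_congr rfl fun _ _ => by ring

theorem localizer_mulVec (x : Fin 2 × Fin 2 → ℂ) :
    localizer lam *ᵥ x = fun p => 2 * x p.swap - x p - (spin lam *ᵥ fun l => x (p.1, l)) p.2 := by
  rw [localizer_eq, sub_mulVec, sum_pauli_kronecker_self_mulVec, one_kronecker_mulVec]
  rfl

theorem norm_sq_eq_sum_sq : ‖lam‖ ^ 2 = lam 0 ^ 2 + lam 1 ^ 2 + lam 2 ^ 2 := by
  simp [EuclideanSpace.real_norm_sq_eq, Fin.sum_univ_three]

theorem exists_spin_mulVec_eq_smul : ∃ ψ : Fin 2 → ℂ, ψ ≠ 0 ∧ spin lam *ᵥ ψ = (‖lam‖ : ℂ) • ψ := by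
  have hr := norm_sq_eq_sum_sq lam
  rw [spin_eq]
  generalize lam 0 = a, lam 1 = b, lam 2 = c, ‖lam‖ = r at *
  by_cases h : r + c = 0
  · have hab : a ^ 2 + b ^ 2 = 0 := by rw [eq_neg_of_add_eq_zero_left h] at hr; linarith
    have ha : a = 0 := by nlinarith
    have hb : b = 0 := by nlinarith
    refine ⟨![0, 1], by simp, ?_⟩
    ext i
    fin_cases i <;> simp [ha, hb, eq_neg_of_add_eq_zero_right h]
  · -- the first column of `|λ| + λ·σ`, which `λ·σ` maps to `|λ|` times itself since `(λ·σ)² = |λ|²`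
    refine ⟨![((r + c : ℝ) : ℂ), a + b * I], fun h0 => h (ofReal_eq_zero.mp (congrFun h0 0)), ?_⟩
    have hrC : (r : ℂ) ^ 2 = a ^ 2 + b ^ 2 + c ^ 2 := by exact_mod_cast hr
    ext i
    fin_cases i
    · simp only [Fin.zero_eta, mulVec_fin_two, of_apply, cons_val_zero, cons_val_one,
        Pi.smul_apply, smul_eq_mul, ofReal_add]
      linear_combination -hrC - (b : ℂ) ^ 2 * I_sq
    · simp only [Fin.mk_one, mulVec_fin_two, of_apply, cons_val_zero, cons_val_one,
        Pi.smul_apply, smul_eq_mul, ofReal_add]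
      ring

theorem localizer_mulVec_kronecker_self {ψ : Fin 2 → ℂ} (hψ : spin lam *ᵥ ψ = (‖lam‖ : ℂ) • ψ) :
    localizer lam *ᵥ (fun p => ψ p.1 * ψ p.2) = (1 - ‖lam‖ : ℂ) • fun p => ψ p.1 * ψ p.2 := by
  have hψ_row (i : Fin 2) : (spin lam *ᵥ fun l => ψ i * ψ l) = ψ i • (‖lam‖ : ℂ) • ψ := by
    rw [← hψ, ← mulVec_smul]
    rfl
  ext p
  simp only [localizer_mulVec, hψ_row, Prod.fst_swap, Prod.snd_swap, Pi.smul_apply, smul_eq_mul]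
  ring

noncomputable def spinForm (ψ : Fin 2 → ℂ) : ℝ :=
  (star ψ ⬝ᵥ ((‖lam‖ : ℂ) • ψ - spin lam *ᵥ ψ)).re

theorem two_mul_norm_mul_spinForm (ψ : Fin 2 → ℂ) :
    2 * ‖lam‖ * spinForm lam ψ = ∑ k, normSq (((‖lam‖ : ℂ) • ψ - spin lam *ᵥ ψ) k) := by
  have hr := norm_sq_eq_sum_sq lam
  simp only [spinForm, spin_eq, dotProduct, Fin.sum_univ_two, mulVec_fin_two, of_apply,
    cons_val_zero, cons_val_one, Pi.sub_apply, Pi.smul_apply, Pi.star_apply, RCLike.star_def,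
    smul_eq_mul, normSq_apply, add_re, sub_re, mul_re, add_im, sub_im, mul_im, conj_re, conj_im,
    ofReal_re, ofReal_im, I_re, I_im, neg_re, neg_im]
  linear_combination ((ψ 0).re ^ 2 + (ψ 0).im ^ 2 + (ψ 1).re ^ 2 + (ψ 1).im ^ 2) * hr

theorem spinForm_nonneg (ψ : Fin 2 → ℂ) : 0 ≤ spinForm lam ψ := by
  rcases (norm_nonneg lam).eq_or_lt with h | h
  · rw [eq_comm, norm_eq_zero] at h
    simp [spinForm, spin, h]
  · refine (mul_nonneg_iff_of_pos_left (by positivity : (0 : ℝ) < 2 * ‖lam‖)).mp ?_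
    rw [two_mul_norm_mul_spinForm]
    exact Finset.sum_nonneg fun k _ => normSq_nonneg _

theorem sum_normSq_localizer_mulVec (x : Fin 2 × Fin 2 → ℂ) :
    ∑ p, normSq ((localizer lam *ᵥ x) p) = (1 - ‖lam‖) ^ 2 * ∑ p, normSq (x p)
      + 4 * normSq (x (0, 1) - x (1, 0)) + 2 * ∑ k, spinForm lam (fun i => x (i, k)) := by
  have hr := norm_sq_eq_sum_sq lam
  rw [localizer_mulVec]
  simp only [spinForm, spin_eq, Fintype.sum_prod_type, dotProduct, Fin.sum_univ_two,
    mulVec_fin_two, of_apply, cons_val_zero, cons_val_one, Prod.swap, Pi.sub_apply, Pi.smul_apply,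
    Pi.star_apply, RCLike.star_def, smul_eq_mul, normSq_apply, add_re, sub_re, mul_re, add_im,
    sub_im, mul_im, conj_re, conj_im, ofReal_re, ofReal_im, I_re, I_im, neg_re, neg_im, re_ofNat,
    im_ofNat]
  linear_combination (-1) * ((x (0, 0)).re ^ 2 + (x (0, 0)).im ^ 2 + (x (0, 1)).re ^ 2
    + (x (0, 1)).im ^ 2 + (x (1, 0)).re ^ 2 + (x (1, 0)).im ^ 2 + (x (1, 1)).re ^ 2
    + (x (1, 1)).im ^ 2) * hr

theorem abs_mul_norm_le_norm_localizer (x : EuclideanSpace ℂ (Fin 2 × Fin 2)) :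
    |‖lam‖ - 1| * ‖x‖ ≤ ‖toEuclideanLin (localizer lam) x‖ := by
  have hsq : (|‖lam‖ - 1| * ‖x‖) ^ 2 ≤ ‖toEuclideanLin (localizer lam) x‖ ^ 2 := by
    simp only [mul_pow, sq_abs, EuclideanSpace.norm_sq_eq, Complex.sq_norm]
    rw [Matrix.ofLp_toLpLin, Matrix.toLin'_apply, sum_normSq_localizer_mulVec, sub_sq_comm]
    have := Finset.sum_nonneg fun k (_ : k ∈ Finset.univ) => spinForm_nonneg lam fun i => x (i, k)
    linarith [normSq_nonneg (x (0, 1) - x (1, 0))]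
  exact (pow_le_pow_iff_left₀ (by positivity) (norm_nonneg _) two_ne_zero).mp hsq

theorem smin_localizer : smin (localizer lam) = |‖lam‖ - 1| := by
  obtain ⟨ψ, hψ, hspin⟩ := exists_spin_mulVec_eq_smul lam
  have hψψ : (fun p : Fin 2 × Fin 2 => ψ p.1 * ψ p.2) ≠ 0 := by
    obtain ⟨i, hi⟩ := Function.ne_iff.mp hψ
    exact Function.ne_iff.mpr ⟨(i, i), by simpa using hi⟩
  have hμ : ‖(1 - ‖lam‖ : ℂ)‖ = |‖lam‖ - 1| := by
    rw [abs_sub_comm]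
    exact_mod_cast Complex.norm_real (1 - ‖lam‖)
  rw [← hμ]
  exact smin_eq_norm_of_mulVec_eq_smul (hμ ▸ abs_mul_norm_le_norm_localizer lam) hψψ
    (localizer_mulVec_kronecker_self lam hspin)

end PauliLocalizer

theorem clifford_spectrum_of_pauli_matrices :
    (∀ lam : EuclideanSpace ℝ (Fin 3),
      smin (∑ j, ((pauli j - (lam j : ℂ) • 1) ⊗ₖ pauli j)) = |‖lam‖ - 1|) ∧
    {lam : EuclideanSpace ℝ (Fin 3) |
      smin (∑ j, ((pauli j - (lam j : ℂ) • 1) ⊗ₖ pauli j)) = 0} =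
      Metric.sphere 0 1 := by
  refine ⟨PauliLocalizer.smin_localizer, ?_⟩
  ext lam
  change smin (PauliLocalizer.localizer lam) = 0 ↔ lam ∈ Metric.sphere 0 1
  rw [PauliLocalizer.smin_localizer, abs_eq_zero, sub_eq_zero, mem_sphere_zero_iff_norm]
end

section
/- The signature of the localizer L_λ(σ_x, σ_y, σ_z) equals 2 when |λ| < 1 and 0 when |λ| > 1. -/
open scoped Kronecker Matrix

/-- Signature of a Hermitian matrix: number of positive minus number of
negative eigenvalues (junk value `0` for non-Hermitian matrices). -/
noncomputable def sig {ι : Type*} [Fintype ι] [DecidableEq ι]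
    (M : Matrix ι ι ℂ) : ℤ :=
  if h : M.IsHermitian then
    ((Finset.univ.filter fun i => 0 < h.eigenvalues i).card : ℤ) -
    ((Finset.univ.filter fun i => h.eigenvalues i < 0).card : ℤ)
  else 0

/-!
In the product basis `L_λ` is a tridiagonal Hermitian matrix whose characteristic polynomial
factors as `(x² - 2x + 1 - |λ|²) (x² + 2x - 3 - |λ|²)`, so its eigenvalues are `1 ± |λ|` and
`-1 ± √(4 + |λ|²)`. The last two have opposite signs (as `√(4 + |λ|²) > 1`) and `1 + |λ| > 0`,
so the signature is decided by the sign of `1 - |λ|`.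
-/

open Polynomial

theorem sig_eq_of_charpoly_eq {ι : Type*} [Fintype ι] [DecidableEq ι] {A : Matrix ι ι ℂ}
    (hA : A.IsHermitian) {s : Multiset ℝ}
    (h : A.charpoly = (s.map fun μ : ℝ => X - C (μ : ℂ)).prod) :
    sig A = s.countP (0 < ·) - s.countP (· < 0) := by
  have hs : Finset.univ.val.map hA.eigenvalues = s := by
    have hroots := hA.roots_charpoly_eq_eigenvalues
    rw [show A.charpoly = ((s.map Complex.ofReal).map fun a => X - C a).prod by
      rw [h, Multiset.map_map]; rfl, roots_multiset_prod_X_sub_C, ← Multiset.map_map] at hroots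
    exact (Multiset.map_injective Complex.ofReal_injective hroots).symm
  rw [sig, dif_pos hA, ← hs, Multiset.countP_map, Multiset.countP_map]
  rfl

theorem isHermitian_pauli (j : Fin 3) : (pauli j).IsHermitian := by
  fin_cases j <;> ext i k <;> fin_cases i <;> fin_cases k <;> simp [pauli, sx, sy, sz]

noncomputable def pauliLocalizer (lam : EuclideanSpace ℝ (Fin 3)) :
    Matrix (Fin 2 × Fin 2) (Fin 2 × Fin 2) ℂ :=
  ∑ j, (pauli j - (lam j : ℂ) • 1) ⊗ₖ pauli j

theorem isHermitian_pauliLocalizer (lam : EuclideanSpace ℝ (Fin 3)) :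
    (pauliLocalizer lam).IsHermitian := by
  refine isSelfAdjoint_sum _ fun j _ => ?_
  have hσ := isHermitian_pauli j
  have hc : ((lam j : ℂ) • (1 : Matrix (Fin 2) (Fin 2) ℂ)).IsHermitian :=
    Matrix.isHermitian_one.smul (Complex.conj_ofReal _)
  exact (Matrix.conjTranspose_kronecker _ _).trans (by rw [(hσ.sub hc).eq, hσ.eq])

theorem reindex_pauliLocalizer (lam : EuclideanSpace ℝ (Fin 3)) :
    Matrix.reindex finProdFinEquiv finProdFinEquiv (pauliLocalizer lam) =
      !![1 - (lam 2 : ℂ), -lam 0 + lam 1 * Complex.I, 0, 0;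
        -lam 0 - lam 1 * Complex.I, -1 + lam 2, 2, 0;
        0, 2, -1 - lam 2, -lam 0 + lam 1 * Complex.I;
        0, 0, -lam 0 - lam 1 * Complex.I, 1 + lam 2] := by
  ext i j
  fin_cases i <;> fin_cases j <;>
    simp [pauliLocalizer, Fin.sum_univ_three, pauli, sx, sy, sz, finProdFinEquiv, Fin.divNat,
      Fin.modNat] <;> ring

theorem charpoly_pauliLocalizer (lam : EuclideanSpace ℝ (Fin 3)) :
    (pauliLocalizer lam).charpoly =
      (X ^ 2 - 2 * X + C ((1 - ‖lam‖ ^ 2 : ℝ) : ℂ)) *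
        (X ^ 2 + 2 * X - C ((3 + ‖lam‖ ^ 2 : ℝ) : ℂ)) := by
  have hI : C Complex.I ^ 2 = -1 := by rw [← C_pow, Complex.I_sq, C_neg, C_1]
  have hI4 : C Complex.I ^ 4 = 1 := by rw [show 4 = 2 * 2 from rfl, pow_mul, hI]; norm_num
  rw [← Matrix.charpoly_reindex finProdFinEquiv (pauliLocalizer lam), reindex_pauliLocalizer,
    EuclideanSpace.real_norm_sq_eq, Fin.sum_univ_three]
  simp [Matrix.charpoly, Matrix.det_succ_row_zero, Fin.sum_univ_succ, Matrix.charmatrix_apply,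
    show (Fin.succAbove 1 2 : Fin 4) = 3 from rfl]
  ring_nf
  simp only [hI, hI4, C_ofNat]
  ring

theorem charpoly_pauliLocalizer_eq_prod (lam : EuclideanSpace ℝ (Fin 3)) :
    (pauliLocalizer lam).charpoly =
      (({1 + ‖lam‖, 1 - ‖lam‖, -1 + √(4 + ‖lam‖ ^ 2), -1 - √(4 + ‖lam‖ ^ 2)} : Multiset ℝ).map
        fun μ : ℝ => X - C (μ : ℂ)).prod := by
  have ht : ((√(4 + ‖lam‖ ^ 2) : ℝ) : ℂ) ^ 2 = 4 + (‖lam‖ : ℂ) ^ 2 := by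
    exact_mod_cast Real.sq_sqrt (by positivity)
  have hCt := congrArg C ht
  simp only [map_pow, map_add, C_ofNat] at hCt
  rw [charpoly_pauliLocalizer]
  simp only [Multiset.insert_eq_cons, Multiset.map_cons, Multiset.map_singleton,
    Multiset.prod_cons, Multiset.prod_singleton]
  push_cast
  simp only [map_add, map_sub, map_neg, map_one, map_pow, C_ofNat]
  linear_combination (X ^ 2 - 2 * X + 1 - C (‖lam‖ : ℂ) ^ 2) * hCt

theorem signature_of_pauli_localizer (lam : EuclideanSpace ℝ (Fin 3)) :
    (‖lam‖ < 1 → sig (∑ j, ((pauli j - (lam j : ℂ) • 1) ⊗ₖ pauli j)) = 2) ∧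
    (1 < ‖lam‖ → sig (∑ j, ((pauli j - (lam j : ℂ) • 1) ⊗ₖ pauli j)) = 0) := by
  change (‖lam‖ < 1 → sig (pauliLocalizer lam) = 2) ∧
    (1 < ‖lam‖ → sig (pauliLocalizer lam) = 0)
  rw [sig_eq_of_charpoly_eq (isHermitian_pauliLocalizer lam)
    (charpoly_pauliLocalizer_eq_prod lam)]
  have hpos : 0 < 1 + ‖lam‖ := by linarith [norm_nonneg lam]
  have ht : 1 < √(4 + ‖lam‖ ^ 2) := by
    rw [Real.lt_sqrt zero_le_one]
    linarith [sq_nonneg ‖lam‖]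
  have hneg : -1 - √(4 + ‖lam‖ ^ 2) < 0 := by linarith
  refine ⟨fun hlam => ?_, fun hlam => ?_⟩ <;>
    simp [← Multiset.cons_zero, hlam, hlam.not_gt, hpos, hpos.not_gt, ht, ht.not_gt, hneg,
      hneg.not_gt]
end

section
/- Let d be even and Gⱼ = γⱼ ⊗ γⱼ for an irreducible Clifford representation γ₁,…,γ_d. Then the Gⱼ pairwise commute, each Gⱼ is Hermitian with Gⱼ² = I, and there is an orthonormal basis {b_p : p ∈ {±1}^d} of ℂ^{2^d} of joint eigenvectors with Gⱼ b_p = pⱼ b_p; in particular each joint eigenvalue pattern p ∈ {±1}^d occurs with multiplicity exactly one. -/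
open scoped Kronecker Matrix

/-!
The operators `Gⱼ = γⱼ ⊗ γⱼ` are commuting Hermitian involutions, so they have a common unit
eigenvector `v`, with some sign pattern `q`. The unitary `Uₖ = γₖ ⊗ 1` commutes with `Gₖ` and
anticommutes with every other `Gⱼ`, so for `S ⊆ {1, …, d}` the vector `(∏_{k ∈ S} Uₖ) v` is a unit
joint eigenvector with pattern `j ↦ (-1) ^ (|S| + [j ∈ S]) qⱼ`. For even `d` every sign pattern
arises this way. Joint eigenvectors with distinct patterns are orthogonal, and there are
`2 ^ d = dim (ℂ^{2^{d/2}} ⊗ ℂ^{2^{d/2}})` patterns, so these vectors form an orthonormal basis.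
-/

namespace Matrix

theorem IsHermitian.kronecker {m n 𝕜 : Type*} [CommRing 𝕜] [StarRing 𝕜]
    {A : Matrix m m 𝕜} {B : Matrix n n 𝕜} (hA : A.IsHermitian) (hB : B.IsHermitian) :
    (A ⊗ₖ B).IsHermitian := by
  rw [IsHermitian, conjTranspose_kronecker, hA.eq, hB.eq]

variable {R n : Type*} [CommRing R] [Fintype n] {A B : Matrix n n R} {c : R}

theorem kronecker_self_mul_kronecker_self (h : A * B = c • (B * A)) :
    (A ⊗ₖ A) * (B ⊗ₖ B) = (c * c) • ((B ⊗ₖ B) * (A ⊗ₖ A)) := by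
  rw [← mul_kronecker_mul, ← mul_kronecker_mul, h, smul_kronecker, kronecker_smul, smul_smul]

theorem kronecker_self_mul_kronecker_one [DecidableEq n] (h : A * B = c • (B * A)) :
    (A ⊗ₖ A) * (B ⊗ₖ 1) = c • ((B ⊗ₖ 1) * (A ⊗ₖ A)) := by
  rw [← mul_kronecker_mul, ← mul_kronecker_mul, mul_one, one_mul, h, smul_kronecker]

end Matrix

theorem mul_eq_ite_smul_mul_of_anticomm {ι R A : Type*} [DecidableEq ι] [CommRing R] [Ring A]
    [Algebra R A] {γ : ι → A} (hanti : ∀ j k, j ≠ k → γ j * γ k = -(γ k * γ j)) (j k : ι) :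
    γ j * γ k = (if j = k then 1 else -1 : R) • (γ k * γ j) := by
  split_ifs with h
  · rw [h, one_smul]
  · rw [hanti j k h, neg_one_smul]

theorem mul_list_prod_map_eq_smul {ι R A : Type*} [CommSemiring R] [Semiring A] [Algebra R A]
    {g : A} {u : ι → A} {c : ι → R} (h : ∀ k, g * u k = c k • (u k * g)) (L : List ι) :
    g * (L.map u).prod = (L.map c).prod • ((L.map u).prod * g) := by
  induction L with
  | nil => simp
  | cons k L ih =>
    simp only [List.map_cons, List.prod_cons]
    rw [← mul_assoc, h, smul_mul_assoc, mul_assoc, ih, mul_smul_comm, smul_smul, mul_assoc]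

namespace Finset

variable {ι R : Type*} [DecidableEq ι] [CommRing R]

theorem prod_ite_eq_one_neg_one (S : Finset ι) (j : ι) :
    ∏ k ∈ S, (if j = k then 1 else -1 : R) = (-1) ^ #S * if j ∈ S then -1 else 1 := by
  have hneg : ∀ k, (if j = k then 1 else -1 : R) = -(if j = k then -1 else 1) := by
    intro k; split_ifs <;> simp
  simp_rw [hneg, prod_neg, prod_ite_eq]

/-- Take `S` to be the set where `ε = -1`, or its complement if that set has odd size. -/
theorem exists_prod_ite_eq_one_neg_one [Fintype ι] (hι : Even (Fintype.card ι)) {ε : ι → R}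
    (hε : ∀ j, ε j = 1 ∨ ε j = -1) :
    ∃ S : Finset ι, ∀ j, ∏ k ∈ S, (if j = k then 1 else -1 : R) = ε j := by
  classical
  set F := univ.filter fun j => ε j = -1
  have hεF : ∀ j, ε j = if j ∈ F then -1 else 1 := by
    intro j
    rcases hε j with h | h <;> simp [F, h]
  by_cases hF : Even #F
  · exact ⟨F, fun j => by rw [prod_ite_eq_one_neg_one, hF.neg_one_pow, one_mul, hεF]⟩
  · have hFc : Odd #Fᶜ := by
      rw [card_compl]
      exact Nat.Even.sub_odd (card_le_univ F) hι (Nat.not_even_iff_odd.mp hF)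
    refine ⟨Fᶜ, fun j => ?_⟩
    rw [prod_ite_eq_one_neg_one, hFc.neg_one_pow, hεF]
    by_cases hj : j ∈ F <;> simp [hj]

end Finset

theorem Module.End.exists_common_eigenvector_of_mul_self_eq_one {ι R M : Type*} [Fintype ι]
    [CommRing R] [AddCommGroup M] [Module R M] [Nontrivial M] {G : ι → Module.End R M}
    (hsq : ∀ j, G j * G j = 1) (hcomm : ∀ j k, G j * G k = G k * G j) :
    ∃ v ≠ 0, ∀ j, ∃ c : R, (c = 1 ∨ c = -1) ∧ G j v = c • v := by
  classical
  suffices ∀ s : Finset ι, ∃ v ≠ 0, ∀ j ∈ s, ∃ c : R, (c = 1 ∨ c = -1) ∧ G j v = c • v by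
    obtain ⟨v, hv, hvs⟩ := this Finset.univ
    exact ⟨v, hv, fun j => hvs j (Finset.mem_univ j)⟩
  intro s
  induction s using Finset.induction_on with
  | empty => simpa using exists_ne (0 : M)
  | insert k s _ ih =>
    obtain ⟨v, hv, hvs⟩ := ih
    -- `G k v + v` is fixed by the involution `G k`; if it vanishes, `v` itself has eigenvalue `-1`.
    by_cases hw : G k v + v = 0
    · refine ⟨v, hv, (Finset.forall_mem_insert _ _ _).mpr ⟨⟨-1, Or.inr rfl, ?_⟩, hvs⟩⟩
      rw [neg_one_smul]
      exact eq_neg_of_add_eq_zero_left hw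
    · refine ⟨G k v + v, hw,
        (Finset.forall_mem_insert _ _ _).mpr ⟨⟨1, Or.inl rfl, ?_⟩, fun j hj => ?_⟩⟩
      · rw [map_add, ← Module.End.mul_apply, hsq, Module.End.one_apply, one_smul, add_comm]
      · obtain ⟨c, hc, hGv⟩ := hvs j hj
        refine ⟨c, hc, ?_⟩
        rw [map_add, ← Module.End.mul_apply, hcomm, Module.End.mul_apply, hGv, map_smul, smul_add]

section InnerProductSpace

variable {ι κ 𝕜 E : Type*} [RCLike 𝕜] [NormedAddCommGroup E] [InnerProductSpace 𝕜 E]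

theorem orthonormal_of_joint_eigenvectors {T : ι → E →ₗ[𝕜] E} (hT : ∀ i, (T i).IsSymmetric)
    {b : κ → E} (hb : ∀ k, ‖b k‖ = 1) {μ : κ → ι → 𝕜} (hμ : Function.Injective μ)
    (hTb : ∀ k i, T i (b k) = μ k i • b k) : Orthonormal 𝕜 b := by
  refine ⟨hb, fun k k' hkk' => ?_⟩
  obtain ⟨i, hi⟩ : ∃ i, μ k i ≠ μ k' i := by
    by_contra! h
    exact hkk' (hμ (funext h))
  have hmem : ∀ k, b k ∈ Module.End.eigenspace (T i) (μ k i) := fun k =>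
    Module.End.mem_eigenspace_iff.mpr (hTb k i)
  exact (hT i).orthogonalFamily_eigenspaces hi ⟨b k, hmem k⟩ ⟨b k', hmem k'⟩

theorem exists_orthonormalBasis_of_orthonormal [Fintype κ] [FiniteDimensional 𝕜 E] {b : κ → E}
    (hb : Orthonormal 𝕜 b) (hcard : Fintype.card κ = Module.finrank 𝕜 E) :
    ∃ B : OrthonormalBasis κ 𝕜 E, ⇑B = b :=
  ⟨OrthonormalBasis.mk hb (hb.linearIndependent.span_eq_top_of_card_eq_finrank' hcard).ge,
    OrthonormalBasis.coe_mk _ _⟩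

end InnerProductSpace

theorem exists_unit_joint_eigenvector_of_sign_commuting_unitaries {ι E : Type*} [Fintype ι]
    [DecidableEq ι] [NormedAddCommGroup E] [InnerProductSpace ℂ E] [CompleteSpace E]
    (hι : Even (Fintype.card ι)) {T U : ι → E →L[ℂ] E} (hU : ∀ k, U k ∈ unitary (E →L[ℂ] E))
    (hTU : ∀ j k, T j * U k = (if j = k then 1 else -1 : ℂ) • (U k * T j))
    {v : E} (hv : ‖v‖ = 1) {q : ι → ℂ} (hq : ∀ j, q j = 1 ∨ q j = -1)
    (hTv : ∀ j, T j v = q j • v) {p : ι → ℂ} (hp : ∀ j, p j = 1 ∨ p j = -1) :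
    ∃ w : E, ‖w‖ = 1 ∧ ∀ j, T j w = p j • w := by
  have hqq : ∀ j, q j * q j = 1 := fun j => by rcases hq j with h | h <;> simp [h]
  obtain ⟨S, hS⟩ := Finset.exists_prod_ite_eq_one_neg_one hι (ε := fun j => p j * q j)
    (fun j => by rcases hp j with h | h <;> rcases hq j with h' | h' <;> simp [h, h'])
  set W := (S.toList.map U).prod
  have hW : W ∈ unitary (E →L[ℂ] E) := list_prod_mem (by simpa using fun k _ => hU k)
  refine ⟨W v, by rw [ContinuousLinearMap.norm_map_of_mem_unitary hW, hv], fun j => ?_⟩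
  have hTW : T j * W = (p j * q j) • (W * T j) := by
    rw [mul_list_prod_map_eq_smul (hTU j), Finset.prod_map_toList, hS]
  calc T j (W v) = (T j * W) v := rfl
    _ = (p j * q j) • W (q j • v) := by rw [hTW, ← hTv]; rfl
    _ = p j • W v := by rw [map_smul, smul_smul, mul_assoc, hqq, mul_one]

section Clifford

variable {ι n : Type*} [Fintype n] {γ : ι → Matrix n n ℂ}

theorem kronecker_self_mul_comm (hanti : ∀ j k, j ≠ k → γ j * γ k = -(γ k * γ j)) (j k : ι) :
    (γ j ⊗ₖ γ j) * (γ k ⊗ₖ γ k) = (γ k ⊗ₖ γ k) * (γ j ⊗ₖ γ j) := by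
  obtain rfl | hjk := eq_or_ne j k
  · rfl
  · rw [Matrix.kronecker_self_mul_kronecker_self (c := -1) (by rw [hanti j k hjk, neg_one_smul]),
      neg_mul_neg, one_mul, one_smul]

theorem kronecker_self_mul_self [DecidableEq n] (hsq : ∀ j, γ j * γ j = 1) (j : ι) :
    (γ j ⊗ₖ γ j) * (γ j ⊗ₖ γ j) = 1 := by
  rw [← Matrix.mul_kronecker_mul, hsq, Matrix.one_kronecker_one]

theorem exists_unit_joint_eigenvector_kronecker_self [Fintype ι] [DecidableEq ι] [DecidableEq n]
    [Nonempty n] (hι : Even (Fintype.card ι))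
    (hherm : ∀ j, (γ j).IsHermitian) (hsq : ∀ j, γ j * γ j = 1)
    (hanti : ∀ j k, j ≠ k → γ j * γ k = -(γ k * γ j)) {p : ι → ℂ}
    (hp : ∀ j, p j = 1 ∨ p j = -1) :
    ∃ w : EuclideanSpace ℂ (n × n), ‖w‖ = 1 ∧
      ∀ j, Matrix.toEuclideanLin (γ j ⊗ₖ γ j) w = p j • w := by
  set T := fun j => Matrix.toEuclideanCLM (𝕜 := ℂ) (γ j ⊗ₖ γ j)
  set U := fun k => Matrix.toEuclideanCLM (𝕜 := ℂ) (γ k ⊗ₖ (1 : Matrix n n ℂ))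
  have hTT : ∀ j, T j * T j = 1 := fun j => by
    simp only [T, ← map_mul, kronecker_self_mul_self hsq, map_one]
  have hTcomm : ∀ j k, T j * T k = T k * T j := fun j k => by
    simp only [T, ← map_mul, kronecker_self_mul_comm hanti]
  have hU : ∀ k, U k ∈ unitary _ := fun k => by
    refine Unitary.map_mem _ (Matrix.kronecker_mem_unitary ?_ (one_mem _))
    rw [Unitary.mem_iff, Matrix.star_eq_conjTranspose, (hherm k).eq, hsq, and_self]
  have hTU : ∀ j k, T j * U k = (if j = k then 1 else -1 : ℂ) • (U k * T j) := fun j k => by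
    simp only [T, U, ← map_mul, ← map_smul]
    rw [Matrix.kronecker_self_mul_kronecker_one (mul_eq_ite_smul_mul_of_anticomm hanti j k)]
  obtain ⟨v, hv, hvT⟩ := Module.End.exists_common_eigenvector_of_mul_self_eq_one
    (G := fun j => ContinuousLinearMap.toLinearMapRingHom (T j))
    (fun j => by rw [← map_mul, hTT, map_one]) (fun j k => by rw [← map_mul, hTcomm, map_mul])
  choose q hq hTv using hvT
  exact exists_unit_joint_eigenvector_of_sign_commuting_unitaries hι hU hTU
    (norm_smul_inv_norm (𝕜 := ℂ) hv) hq
    (fun j => by rw [map_smul, smul_comm (q j), ← hTv j]; rfl) hp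

end Clifford

theorem joint_diagonalization_even_case
    {d : ℕ} (hd : Even d)
    (γ : Fin d → Matrix (Fin (2 ^ (d / 2))) (Fin (2 ^ (d / 2))) ℂ)
    (hherm : ∀ j, (γ j).IsHermitian)
    (hsq : ∀ j, γ j * γ j = 1)
    (hanti : ∀ j k, j ≠ k → γ j * γ k = -(γ k * γ j)) :
    (∀ j k, (γ j ⊗ₖ γ j) * (γ k ⊗ₖ γ k) = (γ k ⊗ₖ γ k) * (γ j ⊗ₖ γ j)) ∧
    (∀ j, (γ j ⊗ₖ γ j).IsHermitian ∧ (γ j ⊗ₖ γ j) * (γ j ⊗ₖ γ j) = 1) ∧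
    ∃ b : OrthonormalBasis (Fin d → ({1, -1} : Finset ℝ)) ℂ
        (EuclideanSpace ℂ (Fin (2 ^ (d / 2)) × Fin (2 ^ (d / 2)))),
      ∀ (p : Fin d → ({1, -1} : Finset ℝ)) (j : Fin d),
        Matrix.toEuclideanLin (γ j ⊗ₖ γ j) (b p) = ((p j : ℝ) : ℂ) • b p := by
  have hGherm : ∀ j, (γ j ⊗ₖ γ j).IsHermitian := fun j => (hherm j).kronecker (hherm j)
  refine ⟨kronecker_self_mul_comm hanti, fun j => ⟨hGherm j, kronecker_self_mul_self hsq j⟩, ?_⟩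
  have hp : ∀ (p : Fin d → ({1, -1} : Finset ℝ)) j, ((p j : ℝ) : ℂ) = 1 ∨ ((p j : ℝ) : ℂ) = -1 :=
    fun p j => by rcases Finset.mem_insert.mp (p j).2 with h | h <;> simp_all
  choose b hb_norm hb_eig using fun p => exists_unit_joint_eigenvector_kronecker_self
    (by simpa using hd) hherm hsq hanti (hp p)
  have hb : Orthonormal ℂ b := orthonormal_of_joint_eigenvectors
    (fun j => Matrix.isSymmetric_toEuclideanLin_iff.mpr (hGherm j)) hb_norm
    (fun p p' h => funext fun j => Subtype.ext (Complex.ofReal_injective (congrFun h j))) hb_eig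
  have hcard : Fintype.card (Fin d → ({1, -1} : Finset ℝ)) =
      Module.finrank ℂ (EuclideanSpace ℂ (Fin (2 ^ (d / 2)) × Fin (2 ^ (d / 2)))) := by
    obtain ⟨m, rfl⟩ := hd
    have hpair : ({1, -1} : Finset ℝ).card = 2 := Finset.card_pair (by norm_num)
    simp [show (m + m) / 2 = m by omega, ← pow_add, hpair]
  obtain ⟨B, hB⟩ := exists_orthonormalBasis_of_orthonormal hb hcard
  exact ⟨B, hB ▸ hb_eig⟩
end

section
/- If γ₁,…,γ_d ∈ M_r(ℂ) with r > 0 form any (not necessarily irreducible) representation of the Clifford relations, then for all Hermitian A₁,…,A_d and λ ∈ ℝ^d, the smallest singular value of Σⱼ (Aⱼ - λⱼ) ⊗ γⱼ equals the smallest singular value of Σⱼ (Aⱼ - λⱼ) ⊗ eⱼ, where e₁,…,e_d are the universal Clifford generators in Cℓ(d); in particular the Clifford spectrum does not depend on the choice of nontrivial representation. -/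
open scoped Kronecker Matrix

theorem Finset.sum_pow_eq_sum_prod_ofFn {ι R : Type*} [Fintype ι] [Semiring R] (x : ι → R)
    (N : ℕ) : (∑ j, x j) ^ N = ∑ f : Fin N → ι, ((List.ofFn f).map x).prod := by
  induction N with
  | zero => simp
  | succ N ih =>
    rw [pow_succ', ih, Finset.mul_sum, ← (Fin.consEquiv fun _ => ι).sum_comp,
      Fintype.sum_prod_type]
    simp only [Fin.consEquiv, List.ofFn_succ, Finset.sum_mul]
    exact Finset.sum_comm

theorem Matrix.prod_map_kronecker {ι m n R : Type*} [Fintype m] [DecidableEq m] [Fintype n]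
    [DecidableEq n] [CommRing R] (B : ι → Matrix m m R) (C : ι → Matrix n n R) (l : List ι) :
    (l.map fun j => B j ⊗ₖ C j).prod = (l.map B).prod ⊗ₖ (l.map C).prod := by
  induction l with
  | nil => simp
  | cons a t ih => simp [ih, Matrix.mul_kronecker_mul]

theorem Matrix.IsHermitian.kronecker_s19 {m n 𝕜 : Type*} [RCLike 𝕜] {X : Matrix m m 𝕜}
    {Y : Matrix n n 𝕜} (hX : X.IsHermitian) (hY : Y.IsHermitian) : (X ⊗ₖ Y).IsHermitian := by
  rw [Matrix.IsHermitian, Matrix.conjTranspose_kronecker, hX.eq, hY.eq]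

theorem Matrix.IsHermitian.trace_pow {n 𝕜 : Type*} [RCLike 𝕜] [Fintype n] [DecidableEq n]
    {M : Matrix n n 𝕜} (hM : M.IsHermitian) (N : ℕ) :
    (M ^ N).trace = ∑ i, (hM.eigenvalues i : 𝕜) ^ N := by
  conv_lhs => rw [hM.spectral_theorem, ← map_pow]
  rw [Unitary.conjStarAlgAut_apply, Matrix.trace_mul_cycle,
    Unitary.coe_star_mul_self, one_mul, Matrix.diagonal_pow, Matrix.trace_diagonal]
  simp

structure IsCliffordFamily {ι R : Type*} [Ring R] (γ : ι → R) : Prop where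
  mul_self : ∀ j, γ j * γ j = 1
  anticomm : ∀ j k, j ≠ k → γ j * γ k = -(γ k * γ j)

namespace IsCliffordFamily

section Ring

variable {ι R : Type*} [DecidableEq ι] [Ring R] {γ : ι → R}

theorem mul_prod_map_of_anticomm (hanti : ∀ j k, j ≠ k → γ j * γ k = -(γ k * γ j))
    (a : ι) (u : List ι) :
    γ a * (u.map γ).prod = (-1 : ℤ) ^ (u.length - u.count a) • ((u.map γ).prod * γ a) := by
  induction u with
  | nil => simp
  | cons b w ih =>
    have hcount := w.count_le_length (a := a)
    simp only [List.map_cons, List.prod_cons, List.length_cons, List.count_cons, beq_iff_eq]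
    by_cases hba : b = a
    · subst hba
      rw [if_pos rfl, Nat.add_sub_add_right, mul_assoc, ih, mul_smul_comm]
    · rw [if_neg hba, add_zero, Nat.sub_add_comm hcount, pow_succ, mul_neg_one, neg_smul,
        ← mul_assoc, hanti a b (Ne.symm hba), neg_mul, mul_assoc, ih, mul_smul_comm, mul_assoc]

theorem prod_map_cons_append_cons (hγ : IsCliffordFamily γ) (a : ι) (u v : List ι) :
    ((a :: (u ++ a :: v)).map γ).prod =
      (-1 : ℤ) ^ (u.length - u.count a) • ((u ++ v).map γ).prod := by
  simp only [List.map_cons, List.prod_cons, List.map_append, List.prod_append]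
  rw [← mul_assoc, mul_prod_map_of_anticomm hγ.anticomm, smul_mul_assoc, mul_assoc,
    ← mul_assoc (γ a), hγ.mul_self, one_mul]

end Ring

section Matrix

variable {ι m m' R : Type*} [DecidableEq ι] [Fintype m] [DecidableEq m] [Fintype m']
  [DecidableEq m'] [CommRing R] [IsAddTorsionFree R]

theorem trace_prod_map_cons_eq_zero {γ : ι → Matrix m m R}
    (hanti : ∀ j k, j ≠ k → γ j * γ k = -(γ k * γ j))
    {a : ι} {t : List ι} (ha : a ∉ t) (ht : Odd t.length) :
    ((a :: t).map γ).prod.trace = 0 := by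
  have hcomm := mul_prod_map_of_anticomm hanti a t
  rw [List.count_eq_zero_of_not_mem ha, Nat.sub_zero, ht.neg_one_pow, neg_one_zsmul] at hcomm
  rw [List.map_cons, List.prod_cons, ← self_eq_neg]
  nth_rw 2 [hcomm]
  rw [Matrix.trace_neg, neg_neg, Matrix.trace_mul_comm]

theorem card_mul_trace_prod_map_eq {γ : ι → Matrix m m R} {γ' : ι → Matrix m' m' R}
    (hγ : IsCliffordFamily γ) (hγ' : IsCliffordFamily γ') :
    ∀ l : List ι, Even l.length →
      (Fintype.card m' : R) * (l.map γ).prod.trace = Fintype.card m * (l.map γ').prod.trace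
  | [], _ => by simp [mul_comm]
  | a :: t, hl => by
    by_cases ha : a ∈ t
    · obtain ⟨u, v, rfl⟩ := List.append_of_mem ha
      have hshorter : Even (u ++ v).length := by
        simp only [List.length_cons, List.length_append] at hl ⊢
        grind
      rw [hγ.prod_map_cons_append_cons, hγ'.prod_map_cons_append_cons, Matrix.trace_smul,
        Matrix.trace_smul, mul_smul_comm, mul_smul_comm,
        card_mul_trace_prod_map_eq hγ hγ' (u ++ v) hshorter]
    · have ht : Odd t.length := by simpa [Nat.even_add_one] using hl
      rw [trace_prod_map_cons_eq_zero hγ.anticomm ha ht,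
        trace_prod_map_cons_eq_zero hγ'.anticomm ha ht, mul_zero, mul_zero]
termination_by l => l.length

theorem card_mul_trace_sum_kronecker_pow_eq [Fintype ι] {n : Type*} [Fintype n] [DecidableEq n]
    {γ : ι → Matrix m m R} {γ' : ι → Matrix m' m' R}
    (hγ : IsCliffordFamily γ) (hγ' : IsCliffordFamily γ')
    (B : ι → Matrix n n R) {N : ℕ} (hN : Even N) :
    (Fintype.card m' : R) * ((∑ j, B j ⊗ₖ γ j) ^ N).trace =
      Fintype.card m * ((∑ j, B j ⊗ₖ γ' j) ^ N).trace := by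
  simp only [Finset.sum_pow_eq_sum_prod_ofFn, Matrix.trace_sum, Finset.mul_sum,
    Matrix.prod_map_kronecker, Matrix.trace_kronecker]
  refine Finset.sum_congr rfl fun f _ => ?_
  rw [mul_left_comm, mul_left_comm (Fintype.card m : R),
    hγ.card_mul_trace_prod_map_eq hγ' _ (by simpa using hN)]

end Matrix

end IsCliffordFamily

open Polynomial in
theorem range_subset_range_of_mul_sum_pow_eq {ι κ K : Type*} [Fintype ι] [Fintype κ] [Field K]
    [LinearOrder K] [IsStrictOrderedRing K] {f : ι → K} {g : κ → K} {c c' : K} (hc : 0 < c)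
    (hmoments : ∀ m : ℕ, c * ∑ i, f i ^ m = c' * ∑ k, g k ^ m) :
    Set.range f ⊆ Set.range g := by
  classical
  have hpoly (p : K[X]) : c * ∑ i, p.eval (f i) = c' * ∑ k, p.eval (g k) := by
    induction p using Polynomial.induction_on' with
    | add p q hp hq => simp only [eval_add, Finset.sum_add_distrib, mul_add, hp, hq]
    | monomial m a =>
      simp only [eval_monomial, ← Finset.mul_sum]
      linear_combination a * hmoments m
  rintro _ ⟨i₀, rfl⟩
  by_contra hi₀
  let q : K[X] := ∏ z ∈ Finset.univ.image g, (X - C z) ^ 2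
  have hq_nonneg (x : K) : 0 ≤ q.eval x := by
    simp only [q, eval_prod, eval_pow]
    exact Finset.prod_nonneg fun _ _ => sq_nonneg _
  have hq_pos : 0 < q.eval (f i₀) := by
    refine (hq_nonneg _).lt_of_ne' ?_
    simp only [q, eval_prod, eval_pow, eval_sub, eval_X, eval_C]
    refine Finset.prod_ne_zero_iff.mpr fun z hz => pow_ne_zero _ (sub_ne_zero.mpr ?_)
    rintro rfl
    obtain ⟨k, -, hk⟩ := Finset.mem_image.mp hz
    exact hi₀ ⟨k, hk⟩
  have hq_g (k : κ) : q.eval (g k) = 0 := by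
    simp only [q, eval_prod, eval_pow, eval_sub, eval_X, eval_C]
    exact Finset.prod_eq_zero (Finset.mem_image_of_mem g (Finset.mem_univ k)) (by simp)
  have hsum_pos : 0 < c * ∑ i, q.eval (f i) :=
    mul_pos hc (Finset.sum_pos' (fun i _ => hq_nonneg _) ⟨i₀, Finset.mem_univ _, hq_pos⟩)
  simp [hpoly q, hq_g] at hsum_pos

theorem range_eq_of_mul_sum_pow_eq {ι κ K : Type*} [Fintype ι] [Fintype κ] [Field K]
    [LinearOrder K] [IsStrictOrderedRing K] {f : ι → K} {g : κ → K} {c c' : K} (hc : 0 < c)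
    (hc' : 0 < c') (hmoments : ∀ m : ℕ, c * ∑ i, f i ^ m = c' * ∑ k, g k ^ m) :
    Set.range f = Set.range g :=
  (range_subset_range_of_mul_sum_pow_eq hc hmoments).antisymm
    (range_subset_range_of_mul_sum_pow_eq hc' fun m => (hmoments m).symm)

theorem iInf_abs_eq_of_range_sq_eq {ι κ : Type*} {f : ι → ℝ} {g : κ → ℝ}
    (h : Set.range (fun i => f i ^ 2) = Set.range (fun k => g k ^ 2)) :
    ⨅ i, |f i| = ⨅ k, |g k| := by
  have habs : Set.range (fun i => |f i|) = Set.range (fun k => |g k|) := by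
    simpa only [← Set.range_comp, Function.comp_def, Real.sqrt_sq_eq_abs] using
      congrArg (Real.sqrt '' ·) h
  exact congrArg sInf habs

namespace Matrix.IsHermitian

variable {ι 𝕜 : Type*} [RCLike 𝕜] [Fintype ι] [DecidableEq ι] {M : Matrix ι ι 𝕜}
  (hM : M.IsHermitian)

theorem toEuclideanLin_eigenvectorBasis (i : ι) :
    toEuclideanLin M (hM.eigenvectorBasis i) = (hM.eigenvalues i : 𝕜) • hM.eigenvectorBasis i := by
  rw [← RCLike.real_smul_eq_coe_smul, toLpLin_apply, hM.mulVec_eigenvectorBasis]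
  rfl

theorem eigenvectorBasis_repr_toEuclideanLin (x : EuclideanSpace 𝕜 ι) (i : ι) :
    hM.eigenvectorBasis.repr (toEuclideanLin M x) i =
      hM.eigenvalues i * hM.eigenvectorBasis.repr x i := by
  rw [OrthonormalBasis.repr_apply_apply, OrthonormalBasis.repr_apply_apply,
    ← isSymmetric_toEuclideanLin_iff.mpr hM, hM.toEuclideanLin_eigenvectorBasis, inner_smul_left,
    RCLike.conj_ofReal]

theorem iInf_abs_eigenvalues_mul_norm_le (x : EuclideanSpace 𝕜 ι) :
    (⨅ i, |hM.eigenvalues i|) * ‖x‖ ≤ ‖toEuclideanLin M x‖ := by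
  cases isEmpty_or_nonempty ι
  · simp
  set b := hM.eigenvectorBasis
  set μ := ⨅ i, |hM.eigenvalues i|
  have hμ : 0 ≤ μ := le_ciInf fun i => abs_nonneg _
  have hsq : (μ * ‖x‖) ^ 2 ≤ ‖toEuclideanLin M x‖ ^ 2 := calc
    (μ * ‖x‖) ^ 2 = ∑ i, μ ^ 2 * ‖b.repr x i‖ ^ 2 := by
      rw [mul_pow, ← b.repr.norm_map, EuclideanSpace.norm_sq_eq, Finset.mul_sum]
    _ ≤ ∑ i, ‖b.repr (toEuclideanLin M x) i‖ ^ 2 := by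
      gcongr with i
      rw [hM.eigenvectorBasis_repr_toEuclideanLin, norm_mul, mul_pow, RCLike.norm_ofReal]
      gcongr
      exact ciInf_le (Set.finite_range _).bddBelow i
    _ = ‖toEuclideanLin M x‖ ^ 2 := by
      rw [← EuclideanSpace.norm_sq_eq, b.repr.norm_map]
  exact (pow_le_pow_iff_left₀ (by positivity) (norm_nonneg _) two_ne_zero).mp hsq

end Matrix.IsHermitian

theorem smin_eq_iInf_abs_eigenvalues {ι : Type*} [Fintype ι] [DecidableEq ι]
    {M : Matrix ι ι ℂ} (hM : M.IsHermitian) : smin M = ⨅ i, |hM.eigenvalues i| := by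
  cases isEmpty_or_nonempty ι
  · simp [smin, Metric.sphere_eq_empty_of_subsingleton one_ne_zero]
  obtain ⟨i₀, hi₀⟩ := exists_eq_ciInf_of_finite (f := fun i => |hM.eigenvalues i|)
  have hi₀_mem : hM.eigenvectorBasis i₀ ∈ Metric.sphere (0 : EuclideanSpace ℂ ι) 1 := by
    simp [hM.eigenvectorBasis.norm_eq_one]
  have hnorm : ‖Matrix.toEuclideanLin M (hM.eigenvectorBasis i₀)‖ = ⨅ i, |hM.eigenvalues i| := by
    rw [hM.toEuclideanLin_eigenvectorBasis, norm_smul, hM.eigenvectorBasis.norm_eq_one, mul_one,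
      RCLike.norm_ofReal, hi₀]
  apply le_antisymm
  · exact csInf_le ⟨0, by rintro _ ⟨x, -, rfl⟩; positivity⟩ ⟨_, hi₀_mem, hnorm⟩
  · refine le_csInf ⟨_, _, hi₀_mem, rfl⟩ ?_
    rintro _ ⟨x, hx, rfl⟩
    simpa [mem_sphere_zero_iff_norm.mp hx] using hM.iInf_abs_eigenvalues_mul_norm_le x

theorem smin_independent_of_clifford_rep
    {d n r r' : ℕ} (hr : 0 < r) (hr' : 0 < r')
    (A : Fin d → Matrix (Fin n) (Fin n) ℂ) (hA : ∀ j, (A j).IsHermitian)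
    (γ : Fin d → Matrix (Fin r) (Fin r) ℂ)
    (hherm : ∀ j, (γ j).IsHermitian)
    (hsq : ∀ j, γ j * γ j = 1)
    (hanti : ∀ j k, j ≠ k → γ j * γ k = -(γ k * γ j))
    (γ' : Fin d → Matrix (Fin r') (Fin r') ℂ)
    (hherm' : ∀ j, (γ' j).IsHermitian)
    (hsq' : ∀ j, γ' j * γ' j = 1)
    (hanti' : ∀ j k, j ≠ k → γ' j * γ' k = -(γ' k * γ' j))
    (lam : Fin d → ℝ) :
    smin (∑ j, ((A j - (lam j : ℂ) • 1) ⊗ₖ γ j)) =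
    smin (∑ j, ((A j - (lam j : ℂ) • 1) ⊗ₖ γ' j)) := by
  set B : Fin d → Matrix (Fin n) (Fin n) ℂ := fun j => A j - (lam j : ℂ) • 1
  have hB (j : Fin d) : (B j).IsHermitian :=
    (hA j).sub (Matrix.isHermitian_one.smul (Complex.conj_ofReal (lam j)))
  have hM : (∑ j, B j ⊗ₖ γ j).IsHermitian :=
    isSelfAdjoint_sum _ fun j _ => (hB j).kronecker_s19 (hherm j)
  have hM' : (∑ j, B j ⊗ₖ γ' j).IsHermitian :=
    isSelfAdjoint_sum _ fun j _ => (hB j).kronecker_s19 (hherm' j)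
  have hmoments (m : ℕ) : (r' : ℝ) * ∑ i, (hM.eigenvalues i ^ 2) ^ m =
      r * ∑ k, (hM'.eigenvalues k ^ 2) ^ m := by
    have h := IsCliffordFamily.card_mul_trace_sum_kronecker_pow_eq ⟨hsq, hanti⟩ ⟨hsq', hanti'⟩
      B (even_two_mul m)
    rw [hM.trace_pow, hM'.trace_pow, Fintype.card_fin, Fintype.card_fin] at h
    simp only [pow_mul, RCLike.ofReal_eq_complex_ofReal] at h
    exact_mod_cast h
  rw [smin_eq_iInf_abs_eigenvalues hM, smin_eq_iInf_abs_eigenvalues hM']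
  exact iInf_abs_eq_of_range_sq_eq <|
    range_eq_of_mul_sum_pow_eq (by positivity) (by positivity) hmoments
end
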